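/- arXiv:2311.15996 — 3 statements merged into one kernel-verified Lean document; each statement's English description precedes it below -/
import Mathlib

section
/- Let d ∈ ℕ, let F : ℝ^d × ℝ → ℝ^d be infinitely differentiable, g : ℝ → ℝ, and let u : ℝ^d × ℝ → ℝ be infinitely differentiable satisfying the log-Fokker–Planck equation ∂ₜu(x,t) + (∇·F)(x,t) + ∇u(x,t)·F(x,t) + ½g(t)²‖∇u(x,t)‖² + ½g(t)²Δu(x,t) = 0 at every (x,t) ∈ ℝ^d × ℝ. Then the score s = ∇u satisfies the score-Fokker–Planck equation: for every coordinate i ∈ {1,…,d} and every (x,t), ∂ₜ(∂ᵢu)(x,t) + ∂ᵢ(∇·F)(x,t) + ∑ⱼ (∂ᵢ∂ⱼu)(x,t) Fⱼ(x,t) + ∑ⱼ (∂ᵢFⱼ)(x,t) (∂ⱼu)(x,t) + g(t)² ∑ⱼ (∂ᵢ∂ⱼu)(x,t) (∂ⱼu)(x,t) + ½g(t)² ∂ᵢ(Δu)(x,t) = 0. -/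
open RealInnerProductSpace

/-- Spatial partial derivative in the `i`-th coordinate. -/
noncomputable def spd {d : ℕ} (u : EuclideanSpace ℝ (Fin d) → ℝ) (i : Fin d)
    (x : EuclideanSpace ℝ (Fin d)) : ℝ :=
  fderiv ℝ u x (EuclideanSpace.single i 1)

/-- Spatial divergence of a vector field. -/
noncomputable def sdiv {d : ℕ} (F : EuclideanSpace ℝ (Fin d) → EuclideanSpace ℝ (Fin d))
    (x : EuclideanSpace ℝ (Fin d)) : ℝ :=
  ∑ i, fderiv ℝ (fun y => F y i) x (EuclideanSpace.single i 1)

/-- Spatial Laplacian: sum of second partial derivatives. -/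
noncomputable def slap {d : ℕ} (u : EuclideanSpace ℝ (Fin d) → ℝ)
    (x : EuclideanSpace ℝ (Fin d)) : ℝ :=
  ∑ i, spd (spd u i) i x

section helpers

variable {d : ℕ} {G : Type*} [NormedAddCommGroup G] [NormedSpace ℝ G]

lemma slice_hasFDerivAt (f : EuclideanSpace ℝ (Fin d) × ℝ → G)
    (x : EuclideanSpace ℝ (Fin d)) (t : ℝ) (hf : DifferentiableAt ℝ f (x, t)) :
    HasFDerivAt (fun y => f (y, t))
      ((fderiv ℝ f (x, t)).comp ((ContinuousLinearMap.id ℝ _).prod 0)) x :=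
  hf.hasFDerivAt.comp x (HasFDerivAt.prodMk (hasFDerivAt_id x) (hasFDerivAt_const t x))

lemma fderiv_slice (f : EuclideanSpace ℝ (Fin d) × ℝ → ℝ)
    (x : EuclideanSpace ℝ (Fin d)) (t : ℝ) (v : EuclideanSpace ℝ (Fin d))
    (hf : DifferentiableAt ℝ f (x, t)) :
    fderiv ℝ (fun y => f (y, t)) x v = fderiv ℝ f (x, t) (v, 0) := by
  rw [(slice_hasFDerivAt f x t hf).fderiv]
  simp

lemma spd_slice (f : EuclideanSpace ℝ (Fin d) × ℝ → ℝ)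
    (x : EuclideanSpace ℝ (Fin d)) (t : ℝ) (i : Fin d) (hf : DifferentiableAt ℝ f (x, t)) :
    spd (fun y => f (y, t)) i x = fderiv ℝ f (x, t) (EuclideanSpace.single i 1, 0) := by
  rw [spd, fderiv_slice f x t _ hf]

lemma deriv_slice (f : EuclideanSpace ℝ (Fin d) × ℝ → ℝ)
    (x : EuclideanSpace ℝ (Fin d)) (t : ℝ) (hf : DifferentiableAt ℝ f (x, t)) :
    deriv (fun s => f (x, s)) t = fderiv ℝ f (x, t) (0, 1) := by
  have h : HasFDerivAt (fun s => f (x, s))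
      ((fderiv ℝ f (x, t)).comp ((0 : ℝ →L[ℝ] _).prod (ContinuousLinearMap.id ℝ ℝ))) t :=
    hf.hasFDerivAt.comp t (HasFDerivAt.prodMk (hasFDerivAt_const x t) (hasFDerivAt_id t))
  rw [h.hasDerivAt.deriv]
  simp

lemma swap_fderiv (u : EuclideanSpace ℝ (Fin d) × ℝ → ℝ) (hu : ContDiff ℝ (⊤ : ℕ∞) u)
    (p : EuclideanSpace ℝ (Fin d) × ℝ) (v w : EuclideanSpace ℝ (Fin d) × ℝ) :
    fderiv ℝ (fun q => fderiv ℝ u q v) p w = fderiv ℝ (fun q => fderiv ℝ u q w) p v := by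
  have hd : DifferentiableAt ℝ (fderiv ℝ u) p :=
    ((hu.fderiv_right (m := (⊤ : ℕ∞)) (by simp)).differentiable (by simp)).differentiableAt
  have h1 : ∀ v w : EuclideanSpace ℝ (Fin d) × ℝ,
      fderiv ℝ (fun q => fderiv ℝ u q v) p w = fderiv ℝ (fderiv ℝ u) p w v := by
    intro v w
    rw [fderiv_clm_apply hd (differentiableAt_const v)]
    simp
  rw [h1, h1, (hu.contDiffAt.isSymmSndFDerivAt (by rw [minSmoothness_of_isRCLikeNormedField]; exact WithTop.coe_le_coe.mpr le_top)).eq]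

lemma grad_inner (f : EuclideanSpace ℝ (Fin d) → ℝ) (x v : EuclideanSpace ℝ (Fin d)) :
    ⟪gradient f x, v⟫ = fderiv ℝ f x v := by
  rw [gradient, ← InnerProductSpace.toDual_apply_apply, LinearIsometryEquiv.apply_symm_apply]

lemma grad_apply (f : EuclideanSpace ℝ (Fin d) → ℝ) (x : EuclideanSpace ℝ (Fin d)) (j : Fin d) :
    gradient f x j = fderiv ℝ f x (EuclideanSpace.single j 1) := by
  rw [← grad_inner, EuclideanSpace.inner_single_right]
  simp

lemma grad_inner_sum (f : EuclideanSpace ℝ (Fin d) → ℝ) (x v : EuclideanSpace ℝ (Fin d)) :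
    ⟪gradient f x, v⟫ = ∑ j, fderiv ℝ f x (EuclideanSpace.single j 1) * v j := by
  rw [PiLp.inner_apply]
  simp [grad_apply, RCLike.inner_apply]
  exact Finset.sum_congr rfl fun _ _ => mul_comm _ _

lemma grad_norm_sq (f : EuclideanSpace ℝ (Fin d) → ℝ) (x : EuclideanSpace ℝ (Fin d)) :
    ‖gradient f x‖ ^ 2 = ∑ j, fderiv ℝ f x (EuclideanSpace.single j 1) ^ 2 := by
  rw [← real_inner_self_eq_norm_sq, PiLp.inner_apply]
  simp [grad_apply, RCLike.inner_apply, sq]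

end helpers

/-- If `u` satisfies the log-Fokker–Planck equation
`∂ₜu + ∇·F + ∇u·F + ½g²‖∇u‖² + ½g²Δu = 0`, then the score `s = ∇u` satisfies,
componentwise, the score-Fokker–Planck equation. -/
theorem score_fokker_planck
    (d : ℕ) (F : EuclideanSpace ℝ (Fin d) × ℝ → EuclideanSpace ℝ (Fin d))
    (g : ℝ → ℝ) (u : EuclideanSpace ℝ (Fin d) × ℝ → ℝ)
    (hF : ContDiff ℝ (⊤ : ℕ∞) F) (hu : ContDiff ℝ (⊤ : ℕ∞) u)
    (hLFP : ∀ (x : EuclideanSpace ℝ (Fin d)) (t : ℝ),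
      deriv (fun s => u (x, s)) t
        + sdiv (fun y => F (y, t)) x
        + ⟪gradient (fun y => u (y, t)) x, F (x, t)⟫
        + (1/2) * (g t)^2 * ‖gradient (fun y => u (y, t)) x‖^2
        + (1/2) * (g t)^2 * slap (fun y => u (y, t)) x = 0) :
    ∀ (i : Fin d) (x : EuclideanSpace ℝ (Fin d)) (t : ℝ),
      deriv (fun s => spd (fun y => u (y, s)) i x) t
        + spd (fun y => sdiv (fun z => F (z, t)) y) i x
        + (∑ j, spd (fun y => spd (fun z => u (z, t)) j y) i x * F (x, t) j)
        + (∑ j, spd (fun y => F (y, t) j) i x * spd (fun y => u (y, t)) j x)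
        + (g t)^2 * (∑ j, spd (fun y => spd (fun z => u (z, t)) j y) i x
            * spd (fun y => u (y, t)) j x)
        + (1/2) * (g t)^2 * spd (fun y => slap (fun z => u (z, t)) y) i x = 0 := by
  intro i x t
  classical
  -- smoothness of the basic blocks
  have hu' : ContDiff ℝ (⊤ : ℕ∞) (fderiv ℝ u) := hu.fderiv_right (m := (⊤ : ℕ∞)) (by simp)
  have hS : ∀ v, ContDiff ℝ (⊤ : ℕ∞) (fun p => fderiv ℝ u p v) :=
    fun v => hu'.clm_apply contDiff_const
  have hFj : ∀ j : Fin d, ContDiff ℝ (⊤ : ℕ∞) (fun p => F p j) := by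
    intro j
    have : (fun p => F p j)
        = (EuclideanSpace.proj j : EuclideanSpace ℝ (Fin d) →L[ℝ] ℝ) ∘ F := rfl
    rw [this]
    exact (EuclideanSpace.proj j : EuclideanSpace ℝ (Fin d) →L[ℝ] ℝ).contDiff.comp hF
  have hFj' : ∀ j : Fin d, ContDiff ℝ (⊤ : ℕ∞) (fderiv ℝ (fun p => F p j)) :=
    fun j => (hFj j).fderiv_right (m := (⊤ : ℕ∞)) (by simp)
  have hBj : ∀ j : Fin d, ContDiff ℝ (⊤ : ℕ∞)
      (fun p => fderiv ℝ (fun q => F q j) p (EuclideanSpace.single j 1, (0 : ℝ))) :=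
    fun j => (hFj' j).clm_apply contDiff_const
  have hS' : ∀ v, ContDiff ℝ (⊤ : ℕ∞) (fderiv ℝ (fun p => fderiv ℝ u p v)) :=
    fun v => (hS v).fderiv_right (m := (⊤ : ℕ∞)) (by simp)
  have hT : ∀ j : Fin d, ContDiff ℝ (⊤ : ℕ∞) (fun p =>
      fderiv ℝ (fun q => fderiv ℝ u q (EuclideanSpace.single j 1, (0 : ℝ))) p
        (EuclideanSpace.single j 1, (0 : ℝ))) :=
    fun j => (hS' _).clm_apply contDiff_const
  -- slice identities, valid at every spatial point
  have e2 : ∀ y, sdiv (fun z => F (z, t)) y = ∑ j, fderiv ℝ (fun q => F q j) (y, t)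
      (EuclideanSpace.single j 1, (0 : ℝ)) := by
    intro y
    rw [sdiv]
    exact Finset.sum_congr rfl fun j _ =>
      fderiv_slice (fun q => F q j) y t _ ((hFj j).differentiable (by simp) _)
  have e5 : ∀ y, slap (fun z => u (z, t)) y
      = ∑ j, fderiv ℝ (fun q => fderiv ℝ u q (EuclideanSpace.single j 1, (0 : ℝ))) (y, t)
          (EuclideanSpace.single j 1, (0 : ℝ)) := by
    intro y
    rw [slap]
    refine Finset.sum_congr rfl fun j _ => ?_
    have hinner : spd (fun z => u (z, t)) j
        = fun z => fderiv ℝ u (z, t) (EuclideanSpace.single j 1, (0 : ℝ)) := by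
      funext z
      exact spd_slice u z t j (hu.differentiable (by simp) _)
    rw [hinner, spd_slice _ y t j ((hS _).differentiable (by simp) _)]
  -- the LFP left-hand side as a smooth function of p = (y, s), with time frozen in g
  set H : EuclideanSpace ℝ (Fin d) × ℝ → ℝ := fun p =>
    fderiv ℝ u p ((0 : EuclideanSpace ℝ (Fin d)), (1 : ℝ))
      + (∑ j, fderiv ℝ (fun q => F q j) p (EuclideanSpace.single j 1, (0 : ℝ)))
      + (∑ j, fderiv ℝ u p (EuclideanSpace.single j 1, (0 : ℝ)) * F p j)
      + (1/2) * (g t)^2 * (∑ j, fderiv ℝ u p (EuclideanSpace.single j 1, (0 : ℝ))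
          * fderiv ℝ u p (EuclideanSpace.single j 1, (0 : ℝ)))
      + (1/2) * (g t)^2 * (∑ j, fderiv ℝ
          (fun q => fderiv ℝ u q (EuclideanSpace.single j 1, (0 : ℝ))) p
          (EuclideanSpace.single j 1, (0 : ℝ))) with hH
  have hH0 : ∀ y, H (y, t) = 0 := by
    intro y
    have h := hLFP y t
    have he1 : deriv (fun s => u (y, s)) t
        = fderiv ℝ u (y, t) ((0 : EuclideanSpace ℝ (Fin d)), (1 : ℝ)) :=
      deriv_slice u y t (hu.differentiable (by simp) _)
    have he3 : ⟪gradient (fun z => u (z, t)) y, F (y, t)⟫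
        = ∑ j, fderiv ℝ u (y, t) (EuclideanSpace.single j 1, (0 : ℝ)) * F (y, t) j := by
      rw [grad_inner_sum]
      exact Finset.sum_congr rfl fun j _ => by
        rw [fderiv_slice u y t _ (hu.differentiable (by simp) _)]
    have he4 : ‖gradient (fun z => u (z, t)) y‖^2
        = ∑ j, (fderiv ℝ u (y, t) (EuclideanSpace.single j 1, (0 : ℝ)))^2 := by
      rw [grad_norm_sq]
      exact Finset.sum_congr rfl fun j _ => by
        rw [fderiv_slice u y t _ (hu.differentiable (by simp) _)]
    rw [he1, e2 y, he3, he4, e5 y] at h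
    simp only [pow_two] at h
    simp only [hH, pow_two]
    exact h
  have hHdiff : ContDiff ℝ (⊤ : ℕ∞) H := by
    apply ContDiff.add
    apply ContDiff.add
    apply ContDiff.add
    apply ContDiff.add
    · exact hS _
    · exact ContDiff.sum fun j _ => hBj j
    · exact ContDiff.sum fun j _ => (hS _).mul (hFj j)
    · exact contDiff_const.mul (ContDiff.sum fun j _ => (hS _).mul (hS _))
    · exact contDiff_const.mul (ContDiff.sum fun j _ => hT j)
  have hstar : fderiv ℝ H (x, t) (EuclideanSpace.single i 1, (0 : ℝ)) = 0 := by
    have h0 : (fun y => H (y, t)) = fun _ => (0 : ℝ) := funext hH0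
    have hsl := fderiv_slice H x t (EuclideanSpace.single i 1) (hHdiff.differentiable (by simp) _)
    rw [h0] at hsl
    simp at hsl
    rw [← hsl]
  -- explicit derivative of H at (x, t)
  have dAt : ∀ {f : EuclideanSpace ℝ (Fin d) × ℝ → ℝ}, ContDiff ℝ (⊤ : ℕ∞) f →
      HasFDerivAt f (fderiv ℝ f (x, t)) (x, t) :=
    fun hf => ((hf.differentiable (by simp)) _).hasFDerivAt
  have h1 := dAt (hS ((0 : EuclideanSpace ℝ (Fin d)), (1 : ℝ)))
  have h2 := HasFDerivAt.fun_sum (u := Finset.univ) fun (j : Fin d) _ => dAt (hBj j)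
  have h3 := HasFDerivAt.fun_sum (u := Finset.univ)
    fun (j : Fin d) _ => (dAt (hS (EuclideanSpace.single j 1, (0 : ℝ)))).mul (dAt (hFj j))
  have h4 := HasFDerivAt.fun_sum (u := Finset.univ)
    fun (j : Fin d) _ => (dAt (hS (EuclideanSpace.single j 1, (0 : ℝ)))).mul
      (dAt (hS (EuclideanSpace.single j 1, (0 : ℝ))))
  have h5 := HasFDerivAt.fun_sum (u := Finset.univ) fun (j : Fin d) _ => dAt (hT j)
  have hHder : HasFDerivAt H
      (fderiv ℝ (fun p => fderiv ℝ u p ((0 : EuclideanSpace ℝ (Fin d)), (1 : ℝ))) (x, t)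
        + (∑ j, fderiv ℝ (fun p =>
            fderiv ℝ (fun q => F q j) p (EuclideanSpace.single j 1, (0 : ℝ))) (x, t))
        + (∑ j, (fderiv ℝ u (x, t) (EuclideanSpace.single j 1, (0 : ℝ))
              • fderiv ℝ (fun p => F p j) (x, t)
            + F (x, t) j
              • fderiv ℝ (fun p => fderiv ℝ u p (EuclideanSpace.single j 1, (0 : ℝ))) (x, t)))
        + ((1/2) * (g t)^2) • (∑ j,
            (fderiv ℝ u (x, t) (EuclideanSpace.single j 1, (0 : ℝ))
              • fderiv ℝ (fun p => fderiv ℝ u p (EuclideanSpace.single j 1, (0 : ℝ))) (x, t)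
            + fderiv ℝ u (x, t) (EuclideanSpace.single j 1, (0 : ℝ))
              • fderiv ℝ (fun p => fderiv ℝ u p (EuclideanSpace.single j 1, (0 : ℝ))) (x, t)))
        + ((1/2) * (g t)^2) • (∑ j, fderiv ℝ (fun p =>
            fderiv ℝ (fun q => fderiv ℝ u q (EuclideanSpace.single j 1, (0 : ℝ))) p
              (EuclideanSpace.single j 1, (0 : ℝ))) (x, t))) (x, t) := by
    rw [hH]
    exact (((h1.add h2).add h3).add (h4.const_mul ((1/2) * (g t)^2))).add
      (h5.const_mul ((1/2) * (g t)^2))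
  rw [hHder.fderiv] at hstar
  simp only [ContinuousLinearMap.add_apply, ContinuousLinearMap.coe_sum', Finset.sum_apply,
    ContinuousLinearMap.smul_apply, smul_eq_mul, ContinuousLinearMap.coe_smul'] at hstar
  -- rewrite the goal's terms as directional derivatives on the product space
  have g1 : deriv (fun s => spd (fun y => u (y, s)) i x) t
      = fderiv ℝ (fun p => fderiv ℝ u p ((0 : EuclideanSpace ℝ (Fin d)), (1 : ℝ))) (x, t)
          (EuclideanSpace.single i 1, (0 : ℝ)) := by
    have hin : (fun s => spd (fun y => u (y, s)) i x)
        = fun s => fderiv ℝ u (x, s) (EuclideanSpace.single i 1, (0 : ℝ)) :=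
      funext fun s => spd_slice u x s i (hu.differentiable (by simp) _)
    rw [hin]
    calc deriv (fun s => fderiv ℝ u (x, s) (EuclideanSpace.single i 1, (0 : ℝ))) t
        = fderiv ℝ (fun p => fderiv ℝ u p (EuclideanSpace.single i 1, (0 : ℝ))) (x, t)
            ((0 : EuclideanSpace ℝ (Fin d)), (1 : ℝ)) :=
          deriv_slice _ x t ((hS _).differentiable (by simp) _)
      _ = _ := swap_fderiv u hu (x, t) _ _
  have g2 : spd (fun y => sdiv (fun z => F (z, t)) y) i x
      = ∑ j, fderiv ℝ (fun p =>
          fderiv ℝ (fun q => F q j) p (EuclideanSpace.single j 1, (0 : ℝ))) (x, t)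
          (EuclideanSpace.single i 1, (0 : ℝ)) := by
    have hin : (fun y => sdiv (fun z => F (z, t)) y)
        = fun y => ∑ j, fderiv ℝ (fun q => F q j) (y, t)
            (EuclideanSpace.single j 1, (0 : ℝ)) := funext e2
    rw [hin]
    calc spd (fun y => ∑ j, fderiv ℝ (fun q => F q j) (y, t)
            (EuclideanSpace.single j 1, (0 : ℝ))) i x
        = fderiv ℝ (fun p => ∑ j, fderiv ℝ (fun q => F q j) p
            (EuclideanSpace.single j 1, (0 : ℝ))) (x, t)
            (EuclideanSpace.single i 1, (0 : ℝ)) :=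
          spd_slice _ x t i ((ContDiff.sum fun j _ => hBj j).differentiable (by simp) _)
      _ = _ := by rw [h2.fderiv, ContinuousLinearMap.sum_apply]
  have g5 : spd (fun y => slap (fun z => u (z, t)) y) i x
      = ∑ j, fderiv ℝ (fun p =>
          fderiv ℝ (fun q => fderiv ℝ u q (EuclideanSpace.single j 1, (0 : ℝ))) p
            (EuclideanSpace.single j 1, (0 : ℝ))) (x, t)
          (EuclideanSpace.single i 1, (0 : ℝ)) := by
    have hin : (fun y => slap (fun z => u (z, t)) y)
        = fun y => ∑ j, fderiv ℝ (fun q => fderiv ℝ u q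
            (EuclideanSpace.single j 1, (0 : ℝ))) (y, t)
            (EuclideanSpace.single j 1, (0 : ℝ)) := funext e5
    rw [hin]
    calc spd (fun y => ∑ j, fderiv ℝ (fun q => fderiv ℝ u q
            (EuclideanSpace.single j 1, (0 : ℝ))) (y, t)
            (EuclideanSpace.single j 1, (0 : ℝ))) i x
        = fderiv ℝ (fun p => ∑ j, fderiv ℝ (fun q => fderiv ℝ u q
            (EuclideanSpace.single j 1, (0 : ℝ))) p
            (EuclideanSpace.single j 1, (0 : ℝ))) (x, t)
            (EuclideanSpace.single i 1, (0 : ℝ)) :=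
          spd_slice _ x t i ((ContDiff.sum fun j _ => hT j).differentiable (by simp) _)
      _ = _ := by rw [h5.fderiv, ContinuousLinearMap.sum_apply]
  have g3 : ∀ j : Fin d, spd (fun y => spd (fun z => u (z, t)) j y) i x
      = fderiv ℝ (fun p => fderiv ℝ u p (EuclideanSpace.single j 1, (0 : ℝ))) (x, t)
          (EuclideanSpace.single i 1, (0 : ℝ)) := by
    intro j
    have hin : spd (fun z => u (z, t)) j
        = fun z => fderiv ℝ u (z, t) (EuclideanSpace.single j 1, (0 : ℝ)) :=
      funext fun z => spd_slice u z t j (hu.differentiable (by simp) _)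
    rw [hin]
    exact spd_slice _ x t i ((hS _).differentiable (by simp) _)
  have g4a : ∀ j : Fin d, spd (fun y => F (y, t) j) i x
      = fderiv ℝ (fun p => F p j) (x, t) (EuclideanSpace.single i 1, (0 : ℝ)) :=
    fun j => spd_slice (fun p => F p j) x t i ((hFj j).differentiable (by simp) _)
  have g4b : ∀ j : Fin d, spd (fun y => u (y, t)) j x
      = fderiv ℝ u (x, t) (EuclideanSpace.single j 1, (0 : ℝ)) :=
    fun j => spd_slice u x t j (hu.differentiable (by simp) _)
  rw [g1, g2, g5]
  simp only [g3, g4a, g4b]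
  -- massage hstar into the goal's shape
  rw [Finset.sum_add_distrib] at hstar
  have hA1 : ∑ j : Fin d, fderiv ℝ u (x, t) (EuclideanSpace.single j 1, (0 : ℝ)) *
      fderiv ℝ (fun p => F p j) (x, t) (EuclideanSpace.single i 1, (0 : ℝ))
      = ∑ j : Fin d, fderiv ℝ (fun p => F p j) (x, t) (EuclideanSpace.single i 1, (0 : ℝ)) *
        fderiv ℝ u (x, t) (EuclideanSpace.single j 1, (0 : ℝ)) :=
    Finset.sum_congr rfl fun j _ => mul_comm _ _
  have hA2 : ∑ j : Fin d, F (x, t) j *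
      fderiv ℝ (fun p => fderiv ℝ u p (EuclideanSpace.single j 1, (0 : ℝ))) (x, t)
        (EuclideanSpace.single i 1, (0 : ℝ))
      = ∑ j : Fin d,
        fderiv ℝ (fun p => fderiv ℝ u p (EuclideanSpace.single j 1, (0 : ℝ))) (x, t)
          (EuclideanSpace.single i 1, (0 : ℝ)) * F (x, t) j :=
    Finset.sum_congr rfl fun j _ => mul_comm _ _
  have hB : 1 / 2 * g t ^ 2 * ∑ j : Fin d,
      (fderiv ℝ u (x, t) (EuclideanSpace.single j 1, (0 : ℝ)) *
        fderiv ℝ (fun p => fderiv ℝ u p (EuclideanSpace.single j 1, (0 : ℝ))) (x, t)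
          (EuclideanSpace.single i 1, (0 : ℝ)) +
       fderiv ℝ u (x, t) (EuclideanSpace.single j 1, (0 : ℝ)) *
        fderiv ℝ (fun p => fderiv ℝ u p (EuclideanSpace.single j 1, (0 : ℝ))) (x, t)
          (EuclideanSpace.single i 1, (0 : ℝ)))
      = g t ^ 2 * ∑ j : Fin d,
        fderiv ℝ (fun p => fderiv ℝ u p (EuclideanSpace.single j 1, (0 : ℝ))) (x, t)
          (EuclideanSpace.single i 1, (0 : ℝ)) *
        fderiv ℝ u (x, t) (EuclideanSpace.single j 1, (0 : ℝ)) := by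
    rw [Finset.mul_sum, Finset.mul_sum]
    exact Finset.sum_congr rfl fun j _ => by ring
  rw [hA1, hA2, hB] at hstar
  linarith [hstar]
end

section
/- Let d ∈ ℕ, let f : ℝ^d × ℝ → ℝ^d be infinitely differentiable, g : ℝ → ℝ, and let p : ℝ^d × ℝ → ℝ be infinitely differentiable with p(x,t) > 0 for all (x,t). Then for every (x,t) ∈ ℝ^d × ℝ: ∇·(f(x,t)p(x,t)) − ½g(t)²Δp(x,t) = ∇·( (f(x,t) − ½g(t)²∇log p(x,t)) p(x,t) ). Consequently, the forward Fokker–Planck equation ∂ₜp + ∇·(fp) − ½g²Δp = 0 is equivalent to the continuity equation ∂ₜp + ∇·((f − ½g²∇log p)p) = 0 associated with the probability flow ODE. -/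
open RealInnerProductSpace

lemma grad_coord {d : ℕ} (u : EuclideanSpace ℝ (Fin d) → ℝ) (y : EuclideanSpace ℝ (Fin d))
    (i : Fin d) : gradient u y i = fderiv ℝ u y (EuclideanSpace.single i 1) := by
  have h : (gradient u y) i = ⟪gradient u y, EuclideanSpace.single i (1:ℝ)⟫ := by
    rw [EuclideanSpace.inner_single_right]; simp
  rw [h, gradient, InnerProductSpace.toDual_symm_apply]

lemma key {d : ℕ} (q : EuclideanSpace ℝ (Fin d) → ℝ) (v : EuclideanSpace ℝ (Fin d) → EuclideanSpace ℝ (Fin d))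
    (hq : ContDiff ℝ (⊤ : ℕ∞) q) (hv : ∀ i, Differentiable ℝ (fun y => v y i))
    (hqpos : ∀ y, 0 < q y) (c : ℝ) (x : EuclideanSpace ℝ (Fin d)) :
    sdiv (fun y => q y • v y) x - c * slap q x
      = sdiv (fun y => q y • (v y - c • gradient (fun z => Real.log (q z)) y)) x := by
  have hqd : Differentiable ℝ q := hq.differentiable (by simp)
  -- pointwise component identity
  have hcomp : ∀ (i : Fin d), (fun y => (q y • (v y - c • gradient (fun z => Real.log (q z)) y)) i)
      = fun y => q y * v y i - c * spd q i y := by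
    intro i
    funext y
    have hne : q y ≠ 0 := (hqpos y).ne'
    have hlog : fderiv ℝ (fun z => Real.log (q z)) y = (q y)⁻¹ • fderiv ℝ q y :=
      ((hqd y).hasFDerivAt.log hne).fderiv
    have hg : gradient (fun z => Real.log (q z)) y i = (q y)⁻¹ * spd q i y := by
      rw [grad_coord, hlog]; simp [spd]
    simp only [PiLp.smul_apply, PiLp.sub_apply, smul_eq_mul, hg]
    field_simp
  have hdspd : ∀ i, Differentiable ℝ (fun y => spd q i y) := by
    intro i
    have : ContDiff ℝ (⊤ : ℕ∞) (fderiv ℝ q) := hq.fderiv_right (by simp)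
    exact fun y => ((this.clm_apply contDiff_const).differentiable (by simp)) y
  have hd1 : ∀ i, Differentiable ℝ (fun y => q y * v y i) := fun i => hqd.mul (hv i)
  have hsum : sdiv (fun y => q y • (v y - c • gradient (fun z => Real.log (q z)) y)) x
      = ∑ i, (fderiv ℝ (fun y => q y * v y i) x (EuclideanSpace.single i 1)
          - c * fderiv ℝ (fun y => spd q i y) x (EuclideanSpace.single i 1)) := by
    unfold sdiv
    refine Finset.sum_congr rfl fun i _ => ?_
    rw [hcomp i, fderiv_fun_sub (hd1 i x) ((hdspd i x).const_mul c),
      fderiv_const_mul (hdspd i x) c]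
    simp
  have hsum2 : sdiv (fun y => q y • v y) x
      = ∑ i, fderiv ℝ (fun y => q y * v y i) x (EuclideanSpace.single i 1) := by
    unfold sdiv
    refine Finset.sum_congr rfl fun i _ => ?_
    congr 1
  have hslap : slap q x = ∑ i, fderiv ℝ (fun y => spd q i y) x (EuclideanSpace.single i 1) := rfl
  rw [hsum, Finset.sum_sub_distrib, ← Finset.mul_sum, hsum2, hslap]

/-- `∇·(f p) − ½g²Δp = ∇·((f − ½g²∇ log p) p)`; consequently the forward Fokker–Planck
equation is equivalent to the continuity equation associated with the probability flow
ODE. -/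
theorem probability_flow_continuity_equation
    (d : ℕ) (f : EuclideanSpace ℝ (Fin d) × ℝ → EuclideanSpace ℝ (Fin d))
    (g : ℝ → ℝ) (p : EuclideanSpace ℝ (Fin d) × ℝ → ℝ)
    (hf : ContDiff ℝ (⊤ : ℕ∞) f) (hp : ContDiff ℝ (⊤ : ℕ∞) p) (hpos : ∀ x t, 0 < p (x, t)) :
    (∀ (x : EuclideanSpace ℝ (Fin d)) (t : ℝ),
      sdiv (fun y => p (y, t) • f (y, t)) x
        - (1/2) * (g t)^2 * slap (fun y => p (y, t)) x
      = sdiv (fun y =>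
          p (y, t) • (f (y, t)
            - ((1/2) * (g t)^2) • gradient (fun z => Real.log (p (z, t))) y)) x)
    ∧ ((∀ (x : EuclideanSpace ℝ (Fin d)) (t : ℝ),
          deriv (fun s => p (x, s)) t
            + sdiv (fun y => p (y, t) • f (y, t)) x
            - (1/2) * (g t)^2 * slap (fun y => p (y, t)) x = 0)
        ↔ (∀ (x : EuclideanSpace ℝ (Fin d)) (t : ℝ),
          deriv (fun s => p (x, s)) t
            + sdiv (fun y =>
                p (y, t) • (f (y, t)
                  - ((1/2) * (g t)^2) • gradient (fun z => Real.log (p (z, t))) y)) x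
            = 0)) := by
  have main : ∀ (x : EuclideanSpace ℝ (Fin d)) (t : ℝ),
      sdiv (fun y => p (y, t) • f (y, t)) x
        - (1/2) * (g t)^2 * slap (fun y => p (y, t)) x
      = sdiv (fun y =>
          p (y, t) • (f (y, t)
            - ((1/2) * (g t)^2) • gradient (fun z => Real.log (p (z, t))) y)) x := by
    intro x t
    have hemb : ContDiff ℝ (⊤ : ℕ∞) (fun y : EuclideanSpace ℝ (Fin d) => (y, t)) :=
      contDiff_id.prodMk contDiff_const
    have hq : ContDiff ℝ (⊤ : ℕ∞) (fun y => p (y, t)) := hp.comp hemb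
    have hfv : Differentiable ℝ (fun y => f (y, t)) :=
      (hf.comp hemb).differentiable (by simp)
    have hv : ∀ i, Differentiable ℝ (fun y => f (y, t) i) := fun i y =>
      (((EuclideanSpace.proj i : EuclideanSpace ℝ (Fin d) →L[ℝ] ℝ).hasFDerivAt.comp y (hfv y).hasFDerivAt)).differentiableAt
    exact key (fun y => p (y, t)) (fun y => f (y, t)) hq hv (fun y => hpos y t) _ x
  refine ⟨main, ?_⟩
  constructor
  · intro h x t
    have := h x t
    have := main x t
    linarith
  · intro h x t
    have := h x t
    have := main x t
    linarith
end

section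
/- Let d ∈ ℕ, let F : ℝ^d × ℝ → ℝ^d be continuously differentiable, and let p : ℝ^d × ℝ → ℝ be continuously differentiable with continuous spatial partial derivatives, p(x,τ) > 0 for all (x,τ), and satisfying the continuity equation ∂_τ p(x,τ) = ∇·(F(x,τ)p(x,τ)) for all (x,τ) ∈ ℝ^d × ℝ. Let x̄ : ℝ → ℝ^d be differentiable with x̄'(τ) = −F(x̄(τ),τ) for all τ. Then for every τ ∈ ℝ, the function τ ↦ log p(x̄(τ),τ) is differentiable and d/dτ [log p(x̄(τ),τ)] = (∇·F)(x̄(τ),τ). -/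
open RealInnerProductSpace

/-!
Along the curve, the chain rule gives `d/dτ p(x̄, τ) = ∂_τ p - ∇p · F`. The continuity equation
and the product rule `∇·(pF) = p ∇·F + ∇p · F` turn this into `p ∇·F`, and dividing by `p > 0`
gives the derivative of `log p`.
-/

theorem ContinuousLinearMap.apply_eq_sum_single {𝕜 ι M : Type*} [RCLike 𝕜] [Fintype ι]
    [DecidableEq ι] [AddCommGroup M] [Module 𝕜 M] [TopologicalSpace M]
    (L : EuclideanSpace 𝕜 ι →L[𝕜] M) (v : EuclideanSpace 𝕜 ι) :
    L v = ∑ i, v i • L (EuclideanSpace.single i 1) := by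
  conv_lhs => rw [← (EuclideanSpace.basisFun ι 𝕜).sum_repr v]
  simp [EuclideanSpace.basisFun_apply]

theorem sdiv_fun_smul {d : ℕ} {u : EuclideanSpace ℝ (Fin d) → ℝ}
    {G : EuclideanSpace ℝ (Fin d) → EuclideanSpace ℝ (Fin d)} {x : EuclideanSpace ℝ (Fin d)}
    (hu : DifferentiableAt ℝ u x) (hG : DifferentiableAt ℝ G x) :
    sdiv (fun y => u y • G y) x = u x * sdiv G x + fderiv ℝ u x (G x) := by
  rw [sdiv, sdiv, (fderiv ℝ u x).apply_eq_sum_single, Finset.mul_sum, ← Finset.sum_add_distrib]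
  refine Finset.sum_congr rfl fun i _ => ?_
  have hGi : DifferentiableAt ℝ (fun y => G y i) x := by
    exact (EuclideanSpace.proj i).differentiableAt.comp x hG
  simp only [PiLp.smul_apply, smul_eq_mul]
  rw [fderiv_fun_mul hu hGi]
  rfl

theorem hasDerivAt_along_curve {E M : Type*} [NormedAddCommGroup E] [NormedSpace ℝ E]
    [NormedAddCommGroup M] [NormedSpace ℝ M] {p : E × ℝ → M} {γ : ℝ → E} {v : E} {τ : ℝ}
    (hp : DifferentiableAt ℝ p (γ τ, τ)) (hγ : HasDerivAt γ v τ) :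
    HasDerivAt (fun σ => p (γ σ, σ))
      (fderiv ℝ (fun y => p (y, τ)) (γ τ) v + deriv (fun s => p (γ τ, s)) τ) τ := by
  have hspace : HasFDerivAt (fun y => p (y, τ))
      ((fderiv ℝ p (γ τ, τ)).comp (ContinuousLinearMap.inl ℝ E ℝ)) (γ τ) :=
    hp.hasFDerivAt.comp (γ τ) ((hasFDerivAt_id _).prodMk (hasFDerivAt_const τ _))
  have htime : HasDerivAt (fun s => p (γ τ, s)) (fderiv ℝ p (γ τ, τ) (0, 1)) τ :=
    hp.hasFDerivAt.comp_hasDerivAt τ ((hasDerivAt_const τ _).prodMk (hasDerivAt_id τ))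
  have hsplit : fderiv ℝ p (γ τ, τ) (v, 1) =
      fderiv ℝ p (γ τ, τ) (v, 0) + fderiv ℝ p (γ τ, τ) (0, 1) := by
    rw [← map_add, Prod.mk_add_mk, add_zero, zero_add]
  have hgraph : HasDerivAt (fun σ => (γ σ, σ)) (v, 1) τ := hγ.prodMk (hasDerivAt_id τ)
  rw [hspace.fderiv, htime.deriv, ContinuousLinearMap.comp_apply, ContinuousLinearMap.inl_apply,
    ← hsplit]
  exact hp.hasFDerivAt.comp_hasDerivAt_of_eq τ hgraph rfl

/-- Instantaneous change-of-variables along the reverse-time probability flow: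
if `∂_τ p = ∇·(F p)` and `x̄' = −F(x̄, τ)`, then
`d/dτ log p(x̄(τ), τ) = (∇·F)(x̄(τ), τ)`. -/
theorem log_density_along_reverse_flow
    (d : ℕ) (F : EuclideanSpace ℝ (Fin d) × ℝ → EuclideanSpace ℝ (Fin d))
    (p : EuclideanSpace ℝ (Fin d) × ℝ → ℝ)
    (hF : ContDiff ℝ 1 F) (hp : ContDiff ℝ 1 p)
    (hpos : ∀ x τ, 0 < p (x, τ))
    (hcont : ∀ (x : EuclideanSpace ℝ (Fin d)) (τ : ℝ),
      deriv (fun s => p (x, s)) τ = sdiv (fun y => p (y, τ) • F (y, τ)) x)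
    (xb : ℝ → EuclideanSpace ℝ (Fin d))
    (hxb : ∀ τ, HasDerivAt xb (-F (xb τ, τ)) τ) :
    ∀ τ : ℝ, HasDerivAt (fun σ => Real.log (p (xb σ, σ)))
      (sdiv (fun y => F (y, τ)) (xb τ)) τ := by
  intro τ
  have hp_section : Differentiable ℝ fun y => p (y, τ) :=
    (hp.differentiable one_ne_zero).comp (differentiable_id.prodMk (differentiable_const τ))
  have hF_section : Differentiable ℝ fun y => F (y, τ) :=
    (hF.differentiable one_ne_zero).comp (differentiable_id.prodMk (differentiable_const τ))
  have hflow : HasDerivAt (fun σ => p (xb σ, σ))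
      (p (xb τ, τ) * sdiv (fun y => F (y, τ)) (xb τ)) τ := by
    have h := hasDerivAt_along_curve (hp.differentiable one_ne_zero (xb τ, τ)) (hxb τ)
    rwa [hcont, sdiv_fun_smul (hp_section _) (hF_section _), map_neg,
      neg_add_cancel_comm_assoc] at h
  have hp_ne : p (xb τ, τ) ≠ 0 := (hpos _ τ).ne'
  simpa [hp_ne] using hflow.log hp_ne
end
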